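/- arXiv:math/0109121 — 3 statements merged into one kernel-verified Lean document; each statement's English description precedes it below -/
import Mathlib

section
/- Let p be a prime, μ an additive Haar measure on ℚ_p with μ(ℤ_p) = 1, ψ : ℚ_p → ℂ a continuous additive character trivial on ℤ_p and nontrivial on p^{-1}ℤ_p, and ν ∈ ℂ with Re(ν) > 0. For t ∈ ℚ_p^× define W_ν(t) = ∫_{ℚ_p} ψ(-x)·max(|t|_p, |x|_p/|t|_p)^{-(ν+1)} dμ(x), where r^z = exp(z·log r) for real r > 0. If |t|_p > 1 then W_ν(t) = 0. -/
open MeasureTheory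

/-!
Translating the variable by an element `y` with `ψ y ≠ 1` multiplies the integral by `ψ y`,
while it leaves `max ‖t‖ (‖x‖ / ‖t‖)` unchanged as soon as `‖y‖ ≤ ‖t‖ ^ 2`: this is the
ultrametric inequality. So the integral equals `ψ y` times itself and must vanish. Such a `y` exists because `ψ` is nontrivial on `p⁻¹ℤ_p` and `‖t‖ > 1`
forces `‖t‖ ≥ p` by discreteness of the `p`-adic absolute value.
-/

theorem Padic.natCast_le_norm_of_one_lt_norm {p : ℕ} [Fact p.Prime] {x : ℚ_[p]}
    (hx : 1 < ‖x‖) : (p : ℝ) ≤ ‖x‖ := by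
  simpa using (Padic.norm_le_pow_iff_norm_lt_pow_add_one x 0).not.mp hx.not_ge

theorem periodic_max_norm_div {E : Type*} [SeminormedAddCommGroup E] [IsUltrametricDist E]
    {a b : ℝ} (hb : 0 < b) {y : E} (hy : ‖y‖ ≤ a * b) :
    Function.Periodic (fun x : E => max a (‖x‖ / b)) y := by
  intro x
  rcases le_or_gt ‖x‖ (a * b) with hx | hx
  · have hxy : ‖x + y‖ ≤ a * b := (IsUltrametricDist.norm_add_le_max x y).trans (max_le hx hy)
    simp only [max_eq_left ((div_le_iff₀ hb).2 hxy), max_eq_left ((div_le_iff₀ hb).2 hx)]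
  · have hyx : ‖y‖ < ‖x‖ := hy.trans_lt hx
    simp only [IsUltrametricDist.norm_add_eq_max_of_norm_ne_norm hyx.ne', max_eq_left hyx.le]

theorem integral_neg_mul_periodic_eq_zero {G : Type*} [AddGroup G] [MeasurableSpace G]
    [MeasurableAdd G] (μ : Measure G) [μ.IsAddRightInvariant] (ψ : G → ℂ)
    (hψ : ∀ x y, ψ (x + y) = ψ x * ψ y) {g : G → ℂ} {y : G} (hg : Function.Periodic g y)
    (hψy : ψ y ≠ 1) : ∫ x, ψ (-x) * g x ∂μ = 0 := by
  have htranslate : ψ y * ∫ x, ψ (-x) * g x ∂μ = ∫ x, ψ (-x) * g x ∂μ := by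
    rw [← integral_const_mul]
    conv_rhs => rw [← integral_sub_right_eq_self _ y]
    congr 1 with x
    rw [neg_sub, sub_eq_add_neg, hψ, hg.sub_eq]
    ring
  by_contra hI
  exact hψy ((mul_eq_right₀ hI).1 htranslate)

theorem classOne_whittaker_vanishes_general
    (p : ℕ) [Fact p.Prime]
    [MeasurableSpace ℚ_[p]] [BorelSpace ℚ_[p]]
    (μ : Measure ℚ_[p]) [μ.IsAddHaarMeasure]
    (ψ : ℚ_[p] → ℂ)
    (hψadd : ∀ x y : ℚ_[p], ψ (x + y) = ψ x * ψ y)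
    (hψnt : ∃ x : ℚ_[p], ‖x‖ ≤ (p : ℝ) ∧ ψ x ≠ 1)
    (ν : ℂ)
    (t : ℚ_[p]) (ht1 : 1 < ‖t‖) :
    ∫ x, ψ (-x) * ((max ‖t‖ (‖x‖ / ‖t‖) : ℝ) : ℂ) ^ (-(ν + 1)) ∂μ = 0 := by
  obtain ⟨y, hy, hψy⟩ := hψnt
  have hy_small : ‖y‖ ≤ ‖t‖ * ‖t‖ := calc
    ‖y‖ ≤ p := hy
    _ ≤ ‖t‖ := Padic.natCast_le_norm_of_one_lt_norm ht1
    _ ≤ ‖t‖ * ‖t‖ := le_mul_of_one_le_right (by positivity) ht1.le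
  have hperiodic := periodic_max_norm_div (zero_lt_one.trans ht1) hy_small
  exact integral_neg_mul_periodic_eq_zero μ ψ hψadd
    (hperiodic.comp fun r : ℝ => (r : ℂ) ^ (-(ν + 1))) hψy

/-- The class-one `p`-adic Whittaker function
`W_ν(t) = ∫ ψ(-x)·max(|t|, |x|/|t|)^{-(ν+1)} dx` of the unramified principal series of
`SL_2(ℚ_p)` vanishes for `|t| > 1`. -/
theorem classOne_whittaker_vanishes
    (p : ℕ) [Fact p.Prime]
    [MeasurableSpace ℚ_[p]] [BorelSpace ℚ_[p]]
    (μ : Measure ℚ_[p]) [μ.IsAddHaarMeasure]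
    (hμ : μ {x : ℚ_[p] | ‖x‖ ≤ 1} = 1)
    (ψ : ℚ_[p] → ℂ) (hψc : Continuous ψ)
    (hψadd : ∀ x y : ℚ_[p], ψ (x + y) = ψ x * ψ y)
    (hψabs : ∀ x : ℚ_[p], ‖ψ x‖ = 1)
    (hψtriv : ∀ x : ℚ_[p], ‖x‖ ≤ 1 → ψ x = 1)
    (hψnt : ∃ x : ℚ_[p], ‖x‖ ≤ (p : ℝ) ∧ ψ x ≠ 1)
    (ν : ℂ) (hν : 0 < ν.re)
    (t : ℚ_[p]) (ht : t ≠ 0) (ht1 : 1 < ‖t‖) :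
    ∫ x, ψ (-x) * ((max ‖t‖ (‖x‖ / ‖t‖) : ℝ) : ℂ) ^ (-(ν + 1)) ∂μ = 0 :=
  classOne_whittaker_vanishes_general p μ ψ hψadd hψnt ν t ht1
end

section
/- Let p be a prime and μ× a Haar measure on ℚ_p^× with μ×(ℤ_p^×) = 1. Let g : ℚ_p → ℂ be a continuous function and m, k ∈ ℤ such that g vanishes outside p^{-m}ℤ_p and g(x + u) = g(x) for all x ∈ ℚ_p and u ∈ p^kℤ_p. Then there exists a Laurent polynomial P ∈ ℂ[X, X^{-1}] such that for all λ ∈ ℂ with Re(λ) > 0, the integral ∫_{ℚ_p^×} |t|_p^{λ}·g(t²) dμ×(t) converges and equals P(p^{-λ})/(1 − p^{-λ}); in particular the Mellin transform is a rational function of p^{-λ}. -/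
open MeasureTheory Finset Function Metric

/-!
The shells `‖t‖ = p ^ (-n)` partition `ℚ_[p]ˣ`, each has measure one, and on the `n`-th shell
`‖t‖ ^ λ = w ^ n` with `w = p ^ (-λ)`. So the Mellin transform is `∑ₙ wⁿ aₙ`, where `aₙ` is the
integral of `g (t ^ 2)` over the shell. Since `g` vanishes far out and is constant near `0`,
`aₙ = 0` for `n ≪ 0` and `aₙ = g 0` for `n ≫ 0`; writing `aₙ = ∑_{j ≤ n} (aⱼ - aⱼ₋₁)`, a sum with
finitely many nonzero terms, turns the series into a finite combination of geometric tails
`∑_{n ≥ j} wⁿ = wʲ / (1 - w)`.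
-/

section LaurentSeries

variable {𝕜 : Type*} [NormedField 𝕜] {w : 𝕜}

theorem hasSum_ite_le_zpow (hw₀ : w ≠ 0) (hw : ‖w‖ < 1) (j : ℤ) :
    HasSum (fun n : ℤ => if j ≤ n then w ^ n else 0) (w ^ j / (1 - w)) := by
  have hinj : Injective (fun k : ℕ => j + k) := fun k l h => by simpa using h
  rw [← hinj.hasSum_iff fun n hn => if_neg fun hjn => hn ⟨(n - j).toNat, by dsimp only; omega⟩]
  have hshift : (fun n : ℤ => if j ≤ n then w ^ n else 0) ∘ (fun k : ℕ => j + k) =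
      fun k : ℕ => w ^ j * w ^ k := by
    funext k
    simp [zpow_add₀ hw₀]
  rw [hshift, div_eq_mul_inv]
  exact (hasSum_geometric_of_norm_lt_one hw).mul_left _

theorem sum_filter_le_sub_eq {M : Type*} [AddCommGroup M] {a : ℤ → M} {N₀ N₁ : ℤ} {b : M}
    (h₀ : ∀ n < N₀, a n = 0) (h₁ : ∀ n ≥ N₁, a n = b) (n : ℤ) :
    ∑ j ∈ Icc N₀ N₁ with j ≤ n, (a j - a (j - 1)) = a n := by
  have hbelow : ∀ n < N₀, ∑ j ∈ Icc N₀ N₁ with j ≤ n, (a j - a (j - 1)) = a n := by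
    intro n hn
    rw [h₀ n hn, sum_eq_zero]
    intro j hj
    simp only [mem_filter, mem_Icc] at hj
    omega
  induction n using Int.inductionOn' (b := N₀ - 1) with
  | zero => exact hbelow _ (by omega)
  | succ n hn ih =>
    have hsplit : ∀ j, (if j ≤ n + 1 then a j - a (j - 1) else 0) =
        (if j ≤ n then a j - a (j - 1) else 0) + if j = n + 1 then a j - a (j - 1) else 0 := by
      intro j; split_ifs <;> first | omega | simp
    rw [sum_filter, sum_congr rfl fun j _ => hsplit j, sum_add_distrib, ← sum_filter, ih,
      sum_ite_eq']
    split_ifs with hmem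
    · simp
    · rw [mem_Icc, not_and_or] at hmem
      rw [h₁ n (by omega), h₁ (n + 1) (by omega), add_zero]
  | pred n hn _ => exact hbelow _ (by omega)

theorem hasSum_zpow_mul_of_eventually_const (hw₀ : w ≠ 0) (hw : ‖w‖ < 1) {a : ℤ → 𝕜}
    {N₀ N₁ : ℤ} {b : 𝕜} (h₀ : ∀ n < N₀, a n = 0) (h₁ : ∀ n ≥ N₁, a n = b) :
    HasSum (fun n => w ^ n * a n) ((∑ j ∈ Icc N₀ N₁, (a j - a (j - 1)) * w ^ j) / (1 - w)) := by
  have hterm : ∀ n,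
      w ^ n * a n = ∑ j ∈ Icc N₀ N₁, (a j - a (j - 1)) * if j ≤ n then w ^ n else 0 := by
    intro n
    rw [← sum_filter_le_sub_eq h₀ h₁ n, sum_filter, mul_sum]
    refine sum_congr rfl fun j _ => ?_
    split_ifs <;> ring
  simp_rw [hterm, sum_div, mul_div_assoc]
  exact hasSum_sum fun j _ => (hasSum_ite_le_zpow hw₀ hw j).mul_left (a j - a (j - 1))

end LaurentSeries

theorem Complex.ofReal_zpow_cpow {x : ℝ} (hx : 0 ≤ x) (n : ℤ) (z : ℂ) :
    ((x ^ n : ℝ) : ℂ) ^ z = ((x : ℂ) ^ z) ^ n := by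
  rw [← cpow_int_mul, ← Real.rpow_intCast, ← cpow_mul_ofReal_nonneg hx, ofReal_intCast]

namespace Padic

variable {p : ℕ} [Fact p.Prime]

theorem one_lt_natCast_prime : 1 < (p : ℝ) := by exact_mod_cast (Fact.out : p.Prime).one_lt

theorem iUnion_sphere_zpow :
    ⋃ n : ℤ, sphere (0 : ℚ_[p]) ((p : ℝ) ^ (-n)) = {x | x ≠ 0} := by
  ext x
  simp only [Set.mem_iUnion, mem_sphere_zero_iff_norm, Set.mem_ofPred_eq]
  refine ⟨fun ⟨n, hn⟩ hx => ?_, fun hx => ⟨x.valuation, norm_eq_zpow_neg_valuation hx⟩⟩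
  rw [hx, norm_zero] at hn
  exact (zpow_pos (zero_lt_one.trans one_lt_natCast_prime) _).ne hn

theorem pairwise_disjoint_sphere_zpow :
    Pairwise (Disjoint on fun n : ℤ => sphere (0 : ℚ_[p]) ((p : ℝ) ^ (-n))) := by
  intro i j hij
  refine Set.disjoint_left.mpr fun x hi hj => hij ?_
  rw [mem_sphere_zero_iff_norm] at hi hj
  have hp := (one_lt_natCast_prime (p := p))
  simpa using zpow_right_injective₀ (zero_lt_one.trans hp) hp.ne' (hi.symm.trans hj)

theorem cpow_norm_of_mem_sphere_zpow {t : ℚ_[p]} {n : ℤ}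
    (ht : t ∈ sphere (0 : ℚ_[p]) ((p : ℝ) ^ (-n))) (z : ℂ) :
    ((‖t‖ : ℝ) : ℂ) ^ z = ((p : ℂ) ^ (-z)) ^ n := by
  rw [mem_sphere_zero_iff_norm.mp ht, Complex.ofReal_zpow_cpow (Nat.cast_nonneg p),
    Complex.cpow_neg, inv_zpow', Complex.ofReal_natCast]

theorem norm_natCast_cpow_neg_lt_one {z : ℂ} (hz : 0 < z.re) : ‖(p : ℂ) ^ (-z)‖ < 1 := by
  rw [Complex.norm_natCast_cpow_of_pos (Fact.out : p.Prime).pos, Complex.neg_re]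
  exact Real.rpow_lt_one_of_one_lt_of_neg one_lt_natCast_prime (neg_lt_zero.mpr hz)

theorem natCast_cpow_ne_zero (z : ℂ) : (p : ℂ) ^ z ≠ 0 :=
  norm_pos_iff.mp (Complex.norm_natCast_cpow_pos_of_pos (Fact.out : p.Prime).pos z)

variable [MeasurableSpace ℚ_[p]] [BorelSpace ℚ_[p]] {μ : Measure ℚ_[p]}

theorem measure_sphere_zpow
    (hinv : ∀ c : ℚ_[p], c ≠ 0 → ∀ S : Set ℚ_[p], MeasurableSet S →
      μ ((fun x => c * x) ⁻¹' S) = μ S)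
    (hunit : μ {x : ℚ_[p] | ‖x‖ = 1} = 1) (n : ℤ) :
    μ (sphere 0 ((p : ℝ) ^ (-n))) = 1 := by
  have hp : (p : ℝ) ≠ 0 := (zero_lt_one.trans one_lt_natCast_prime).ne'
  have hpre : (fun x => (p : ℚ_[p]) ^ (-n) * x) ⁻¹' {x | ‖x‖ = 1} =
      sphere 0 ((p : ℝ) ^ (-n)) := by
    ext x
    rw [Set.mem_preimage, Set.mem_ofPred_eq, norm_mul, norm_p_zpow, neg_neg, mul_comm,
      mul_eq_one_iff_eq_inv₀ (zpow_ne_zero n hp), ← zpow_neg, mem_sphere_zero_iff_norm]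
  rw [← hpre, hinv _ (zpow_ne_zero _ (by simp [(Fact.out : p.Prime).ne_zero]))
    _ (isClosed_eq continuous_norm continuous_const).measurableSet, hunit]

noncomputable def sphereIntegral {E : Type*} [NormedAddCommGroup E] [NormedSpace ℝ E]
    (μ : Measure ℚ_[p]) (G : ℚ_[p] → E) (n : ℤ) : E :=
  ∫ t in sphere 0 ((p : ℝ) ^ (-n)), G t ∂μ

theorem integrableOn_sphere_zpow {E : Type*} [NormedAddCommGroup E]
    (hμ : ∀ n : ℤ, μ (sphere 0 ((p : ℝ) ^ (-n))) = 1) {G : ℚ_[p] → E} (hG : Continuous G)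
    (n : ℤ) :
    IntegrableOn G (sphere 0 ((p : ℝ) ^ (-n))) μ :=
  hG.continuousOn.integrableOn_of_subset_isCompact (isCompact_sphere _ _)
    isClosed_sphere.measurableSet subset_rfl (by rw [hμ n]; exact ENNReal.one_ne_top)

theorem sphereIntegral_of_eqOn {E : Type*} [NormedAddCommGroup E] [NormedSpace ℝ E]
    [CompleteSpace E] (hμ : ∀ n : ℤ, μ (sphere 0 ((p : ℝ) ^ (-n))) = 1)
    {G : ℚ_[p] → E} {n : ℤ} {c : E}
    (h : ∀ t ∈ sphere (0 : ℚ_[p]) ((p : ℝ) ^ (-n)), G t = c) :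
    sphereIntegral μ G n = c := by
  rw [sphereIntegral, setIntegral_congr_fun isClosed_sphere.measurableSet h,
    setIntegral_const, measureReal_def, hμ n, ENNReal.toReal_one, one_smul]

section Mellin

variable {G : ℚ_[p] → ℂ} {N₀ N₁ : ℤ}

theorem setIntegral_sphere_cpow_norm_mul (z : ℂ) (n : ℤ) :
    ∫ t in sphere 0 ((p : ℝ) ^ (-n)), ((‖t‖ : ℝ) : ℂ) ^ z * G t ∂μ =
      ((p : ℂ) ^ (-z)) ^ n * sphereIntegral μ G n := by
  rw [sphereIntegral, ← integral_const_mul]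
  exact setIntegral_congr_fun isClosed_sphere.measurableSet fun t ht => by
    rw [cpow_norm_of_mem_sphere_zpow ht]

theorem integrableOn_cpow_norm_mul (hμ : ∀ n : ℤ, μ (sphere 0 ((p : ℝ) ^ (-n))) = 1)
    (hG : Continuous G)
    (hG₀ : ∀ n < N₀, ∀ t ∈ sphere (0 : ℚ_[p]) ((p : ℝ) ^ (-n)), G t = 0)
    (hG₁ : ∀ n ≥ N₁, ∀ t ∈ sphere (0 : ℚ_[p]) ((p : ℝ) ^ (-n)), G t = G 0)
    {z : ℂ} (hz : 0 < z.re) :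
    IntegrableOn (fun t : ℚ_[p] => ((‖t‖ : ℝ) : ℂ) ^ z * G t) {x | x ≠ 0} μ := by
  set w := (p : ℂ) ^ (-z)
  rw [← iUnion_sphere_zpow]
  refine integrableOn_iUnion_of_summable_integral_norm (fun n => ?_) ?_
  · have hint : IntegrableOn (fun t => w ^ n * G t) (sphere 0 ((p : ℝ) ^ (-n))) μ :=
      (integrableOn_sphere_zpow hμ hG n).const_mul _
    refine hint.congr_fun (fun t ht => ?_) isClosed_sphere.measurableSet
    rw [cpow_norm_of_mem_sphere_zpow ht]
  · have hnorm : ∀ n : ℤ, ∫ t in sphere 0 ((p : ℝ) ^ (-n)), ‖((‖t‖ : ℝ) : ℂ) ^ z * G t‖ ∂μ =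
        ‖w‖ ^ n * sphereIntegral μ (fun t => ‖G t‖) n := by
      intro n
      rw [sphereIntegral, ← integral_const_mul]
      exact setIntegral_congr_fun isClosed_sphere.measurableSet fun t ht => by
        rw [norm_mul, cpow_norm_of_mem_sphere_zpow ht, norm_zpow]
    simp_rw [hnorm]
    exact (hasSum_zpow_mul_of_eventually_const (norm_ne_zero_iff.mpr (natCast_cpow_ne_zero _))
      (by rw [norm_norm]; exact norm_natCast_cpow_neg_lt_one hz)
      (fun n hn => sphereIntegral_of_eqOn hμ fun t ht => by rw [hG₀ n hn t ht, norm_zero])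
      (fun n hn => sphereIntegral_of_eqOn hμ fun t ht => by rw [hG₁ n hn t ht])).summable

theorem integral_cpow_norm_mul (hμ : ∀ n : ℤ, μ (sphere 0 ((p : ℝ) ^ (-n))) = 1)
    (hG : Continuous G)
    (hG₀ : ∀ n < N₀, ∀ t ∈ sphere (0 : ℚ_[p]) ((p : ℝ) ^ (-n)), G t = 0)
    (hG₁ : ∀ n ≥ N₁, ∀ t ∈ sphere (0 : ℚ_[p]) ((p : ℝ) ^ (-n)), G t = G 0)
    {z : ℂ} (hz : 0 < z.re) :
    ∫ t in {x | x ≠ 0}, ((‖t‖ : ℝ) : ℂ) ^ z * G t ∂μ =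
      (∑ j ∈ Icc N₀ N₁, (sphereIntegral μ G j - sphereIntegral μ G (j - 1)) *
        ((p : ℂ) ^ (-z)) ^ j) / (1 - (p : ℂ) ^ (-z)) := by
  have hint := integrableOn_cpow_norm_mul hμ hG hG₀ hG₁ hz
  rw [← iUnion_sphere_zpow] at hint ⊢
  refine (hasSum_integral_iUnion (fun n => isClosed_sphere.measurableSet)
    pairwise_disjoint_sphere_zpow hint).unique ?_
  simp_rw [setIntegral_sphere_cpow_norm_mul]
  exact hasSum_zpow_mul_of_eventually_const (natCast_cpow_ne_zero _)
    (norm_natCast_cpow_neg_lt_one hz) (fun n hn => sphereIntegral_of_eqOn hμ (hG₀ n hn))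
    (fun n hn => sphereIntegral_of_eqOn hμ (hG₁ n hn))

end Mellin

end Padic

theorem mellin_transform_rational_general
    (p : ℕ) [Fact p.Prime]
    [MeasurableSpace ℚ_[p]] [BorelSpace ℚ_[p]]
    (μx : Measure ℚ_[p])
    (hinv : ∀ c : ℚ_[p], c ≠ 0 → ∀ S : Set ℚ_[p], MeasurableSet S →
        μx ((fun x => c * x) ⁻¹' S) = μx S)
    (hunit : μx {x : ℚ_[p] | ‖x‖ = 1} = 1)
    (g : ℚ_[p] → ℂ) (hgc : Continuous g) (m k : ℤ)
    (hgsupp : ∀ x : ℚ_[p], (p : ℝ) ^ m < ‖x‖ → g x = 0)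
    (hgper : ∀ x u : ℚ_[p], ‖u‖ ≤ (p : ℝ) ^ (-k) → g (x + u) = g x) :
    ∃ (S : Finset ℤ) (c : ℤ → ℂ), ∀ lam : ℂ, 0 < lam.re →
      IntegrableOn (fun t : ℚ_[p] => ((‖t‖ : ℝ) : ℂ) ^ lam * g (t ^ 2))
        {x : ℚ_[p] | x ≠ 0} μx ∧
      ∫ t in {x : ℚ_[p] | x ≠ 0}, ((‖t‖ : ℝ) : ℂ) ^ lam * g (t ^ 2) ∂μx =
        (∑ n ∈ S, c n * ((p : ℂ) ^ (-lam)) ^ n) / (1 - (p : ℂ) ^ (-lam)) := by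
  have hμ := Padic.measure_sphere_zpow hinv hunit
  have hp := Padic.one_lt_natCast_prime (p := p)
  have hsq : ∀ n : ℤ, ∀ t ∈ sphere (0 : ℚ_[p]) ((p : ℝ) ^ (-n)),
      ‖t ^ 2‖ = (p : ℝ) ^ (-(n * 2)) := fun n t ht => by
    rw [norm_pow, mem_sphere_zero_iff_norm.mp ht, ← zpow_natCast, ← zpow_mul, neg_mul,
      Nat.cast_ofNat]
  have hG₀ : ∀ n < min (-m) 0, ∀ t ∈ sphere (0 : ℚ_[p]) ((p : ℝ) ^ (-n)), g (t ^ 2) = 0 :=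
    fun n hn t ht => hgsupp _ (by rw [hsq n t ht]; exact zpow_lt_zpow_right₀ hp (by omega))
  have hG₁ : ∀ n ≥ max k 0, ∀ t ∈ sphere (0 : ℚ_[p]) ((p : ℝ) ^ (-n)), g (t ^ 2) = g (0 ^ 2) :=
    fun n hn t ht => by
      simpa using hgper 0 (t ^ 2) (by rw [hsq n t ht]; exact zpow_le_zpow_right₀ hp.le (by omega))
  have hG : Continuous fun t : ℚ_[p] => g (t ^ 2) := hgc.comp (continuous_pow 2)
  refine ⟨Icc (min (-m) 0) (max k 0),
    fun j => Padic.sphereIntegral μx (fun t => g (t ^ 2)) j -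
      Padic.sphereIntegral μx (fun t => g (t ^ 2)) (j - 1), fun lam hlam => ?_⟩
  exact ⟨Padic.integrableOn_cpow_norm_mul hμ hG hG₀ hG₁ hlam,
    Padic.integral_cpow_norm_mul hμ hG hG₀ hG₁ hlam⟩

/-- Rationality of the Mellin transform over the root torus for `SL_2(ℚ_p)`: if
`g : ℚ_p → ℂ` is continuous, vanishes outside `p^{-m}ℤ_p` and is invariant under translation
by `pᵏℤ_p`, then there is a Laurent polynomial `P = ∑_{n ∈ S} c_n Xⁿ` such that for all `λ`
with `Re λ > 0` the Mellin transform `∫_{ℚ_p^×} |t|^λ g(t²) d^×t` converges and equals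
`P(p^{-λ})/(1 − p^{-λ})`; in particular it is a rational function of `p^{-λ}`. -/
theorem mellin_transform_rational
    (p : ℕ) [Fact p.Prime]
    [MeasurableSpace ℚ_[p]] [BorelSpace ℚ_[p]]
    (μx : Measure ℚ_[p])
    (hinv : ∀ c : ℚ_[p], c ≠ 0 → ∀ S : Set ℚ_[p], MeasurableSet S →
        μx ((fun x => c * x) ⁻¹' S) = μx S)
    (hzero : μx {0} = 0)
    (hunit : μx {x : ℚ_[p] | ‖x‖ = 1} = 1)
    (g : ℚ_[p] → ℂ) (hgc : Continuous g) (m k : ℤ)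
    (hgsupp : ∀ x : ℚ_[p], (p : ℝ) ^ m < ‖x‖ → g x = 0)
    (hgper : ∀ x u : ℚ_[p], ‖u‖ ≤ (p : ℝ) ^ (-k) → g (x + u) = g x) :
    ∃ (S : Finset ℤ) (c : ℤ → ℂ), ∀ lam : ℂ, 0 < lam.re →
      IntegrableOn (fun t : ℚ_[p] => ((‖t‖ : ℝ) : ℂ) ^ lam * g (t ^ 2))
        {x : ℚ_[p] | x ≠ 0} μx ∧
      ∫ t in {x : ℚ_[p] | x ≠ 0}, ((‖t‖ : ℝ) : ℂ) ^ lam * g (t ^ 2) ∂μx =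
        (∑ n ∈ S, c n * ((p : ℂ) ^ (-lam)) ^ n) / (1 - (p : ℂ) ^ (-lam)) :=
  mellin_transform_rational_general p μx hinv hunit g hgc m k hgsupp hgper
end

section
/- Let p be a prime, μ an additive Haar measure on ℚ_p with μ(ℤ_p) = 1, ψ : ℚ_p → ℂ a continuous additive character trivial on ℤ_p and nontrivial on p^{-1}ℤ_p, and ν ∈ ℂ with Re(ν) > 0. For t ∈ ℚ_p^× define W_ν(t) = ∫_{ℚ_p} ψ(-x)·max(|t|_p, |x|_p/|t|_p)^{-(ν+1)} dμ(x). Then W_ν is of moderate growth: there exist C > 0 and m ∈ ℕ such that |W_ν(t)| ≤ C·max(|t|_p, |t|_p^{-1})^m for all t ∈ ℚ_p^×. -/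
/-!
The integrand has absolute value `max(|t|, |x|/|t|)^(-σ)` with `σ = Re ν + 1 > 1`.
Since `max(1, |x|) ≤ ‖a(t)‖ · max(|t|, |x|/|t|)`, it is dominated by
`‖a(t)‖^⌈σ⌉ · max(1, |x|)^(-σ)`, whose integral is finite for every Haar measure: the ball
of radius `p^k` is covered by `p^k` translates of `ℤ_p`, so the shell
`|x| = p^k` contributes at most `p^(k(1-σ)) μ(ℤ_p)`.
-/

open MeasureTheory Metric
open scoped ENNReal

namespace Padic
variable {p : ℕ} [Fact p.Prime]

theorem closedBall_zero_pow_subset_biUnion (k : ℕ) :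
    closedBall (0 : ℚ_[p]) ((p : ℝ) ^ k) ⊆
      ⋃ i ∈ Finset.range (p ^ k), closedBall ((i : ℚ_[p]) / (p : ℚ_[p]) ^ k) 1 := by
  intro x hx
  have hz : ‖(p : ℚ_[p]) ^ k * x‖ ≤ 1 := by
    rw [norm_mul, norm_p_pow, zpow_neg, zpow_natCast]
    rw [mem_closedBall_zero_iff] at hx
    exact inv_mul_le_one_of_le₀ hx (by positivity)
  have hpk : (p : ℚ_[p]) ^ k ≠ 0 :=
    pow_ne_zero _ (Nat.cast_ne_zero.mpr (Fact.out : p.Prime).ne_zero)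
  set z : ℤ_[p] := ⟨_, hz⟩
  obtain ⟨a, ha⟩ := Ideal.mem_span_singleton'.mp (z.appr_spec k)
  simp only [Set.mem_iUnion, Finset.mem_range, exists_prop]
  refine ⟨z.appr k, z.appr_lt k, ?_⟩
  have hx : x - (z.appr k : ℚ_[p]) / (p : ℚ_[p]) ^ k = a := by
    have := congrArg ((↑) : ℤ_[p] → ℚ_[p]) ha
    push_cast at this
    have hzx : (z : ℚ_[p]) = (p : ℚ_[p]) ^ k * x := rfl
    rw [hzx] at this
    field_simp
    linear_combination -this
  rw [mem_closedBall, dist_eq_norm, hx]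
  exact a.norm_le_one

theorem exists_max_one_norm_eq_pow (x : ℚ_[p]) : ∃ k : ℕ, max 1 ‖x‖ = (p : ℝ) ^ k := by
  rcases eq_or_ne x 0 with rfl | hx
  · exact ⟨0, by simp⟩
  refine ⟨(-x.valuation).toNat, ?_⟩
  have hp : (1 : ℝ) ≤ p := Nat.one_le_cast.mpr (Fact.out : p.Prime).one_lt.le
  rw [norm_eq_zpow_neg_valuation hx, ← zpow_natCast, Int.toNat_eq_max, max_comm,
    (zpow_right_mono₀ hp).map_max, zpow_zero]

section HaarMeasure

variable [MeasurableSpace ℚ_[p]] [BorelSpace ℚ_[p]] (μ : Measure ℚ_[p]) [μ.IsAddHaarMeasure]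

theorem measure_closedBall_zero_pow_le (k : ℕ) :
    μ (closedBall 0 ((p : ℝ) ^ k)) ≤ p ^ k * μ (closedBall 0 1) :=
  calc μ (closedBall 0 ((p : ℝ) ^ k))
      ≤ ∑ i ∈ Finset.range (p ^ k), μ (closedBall ((i : ℚ_[p]) / (p : ℚ_[p]) ^ k) 1) :=
        (measure_mono (closedBall_zero_pow_subset_biUnion k)).trans
          (measure_biUnion_finset_le _ _)
    _ = p ^ k * μ (closedBall 0 1) := by
        simp [Measure.addHaar_closedBall_center]

theorem lintegral_max_one_norm_rpow_neg_lt_top {σ : ℝ} (hσ : 1 < σ) :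
    ∫⁻ x, ENNReal.ofReal (max 1 ‖x‖ ^ (-σ)) ∂μ < ⊤ := by
  have hp : (1 : ℝ) < p := Nat.one_lt_cast.mpr (Fact.out : p.Prime).one_lt
  set B : ℕ → Set ℚ_[p] := fun k => closedBall 0 ((p : ℝ) ^ k)
  set c : ℕ → ℝ≥0∞ := fun k => ENNReal.ofReal (((p : ℝ) ^ k) ^ (-σ))
  set r : ℝ≥0∞ := ENNReal.ofReal ((p : ℝ) ^ (1 - σ))
  have hpointwise (x : ℚ_[p]) :
      ENNReal.ofReal (max 1 ‖x‖ ^ (-σ)) ≤ ∑' k, (B k).indicator (fun _ => c k) x := by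
    obtain ⟨k, hk⟩ := exists_max_one_norm_eq_pow x
    have hx : x ∈ B k := mem_closedBall_zero_iff.mpr (hk ▸ le_max_right _ _)
    rw [hk]
    change c k ≤ _
    rw [← Set.indicator_of_mem hx (fun _ => c k)]
    exact ENNReal.le_tsum k
  have hck (k : ℕ) : c k * p ^ k = r ^ k := by
    rw [← ENNReal.ofReal_natCast, ← ENNReal.ofReal_pow (by positivity),
      ← ENNReal.ofReal_mul (by positivity), ← ENNReal.ofReal_pow (by positivity),
      ← Real.rpow_pow_comm (by positivity), ← mul_pow, ← Real.rpow_add_one (by positivity)]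
    ring_nf
  have hr : r < 1 :=
    ENNReal.ofReal_lt_one.mpr (Real.rpow_lt_one_of_one_lt_of_neg hp (by linarith))
  have hB (k : ℕ) : MeasurableSet (B k) := isClosed_closedBall.measurableSet
  calc ∫⁻ x, ENNReal.ofReal (max 1 ‖x‖ ^ (-σ)) ∂μ
      ≤ ∫⁻ x, ∑' k, (B k).indicator (fun _ => c k) x ∂μ := lintegral_mono hpointwise
    _ = ∑' k, c k * μ (B k) := by
        rw [lintegral_tsum fun k => (measurable_const.indicator (hB k)).aemeasurable]
        simp_rw [lintegral_indicator_const (hB _)]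
    _ ≤ ∑' k, r ^ k * μ (closedBall 0 1) := by
        refine ENNReal.tsum_le_tsum fun k => ?_
        calc c k * μ (B k) ≤ c k * (p ^ k * μ (closedBall 0 1)) :=
              mul_le_mul_right (measure_closedBall_zero_pow_le μ k) _
          _ = r ^ k * μ (closedBall 0 1) := by rw [← mul_assoc, hck]
    _ = (1 - r)⁻¹ * μ (closedBall 0 1) := by rw [ENNReal.tsum_mul_right, ENNReal.tsum_geometric]
    _ < ⊤ := ENNReal.mul_lt_top (by simpa using hr) measure_closedBall_lt_top

theorem integrable_max_one_norm_rpow_neg {σ : ℝ} (hσ : 1 < σ) :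
    Integrable (fun x : ℚ_[p] => max 1 ‖x‖ ^ (-σ)) μ := by
  refine ⟨(continuous_const.max continuous_norm).rpow_const (fun x => Or.inl (by positivity))
    |>.aestronglyMeasurable, ?_⟩
  rw [hasFiniteIntegral_iff_ofReal (.of_forall fun x => by positivity)]
  exact lintegral_max_one_norm_rpow_neg_lt_top μ hσ

end HaarMeasure

end Padic

theorem max_one_le_max_inv_mul_max {T : ℝ} (hT : 0 < T) (y : ℝ) :
    max 1 y ≤ max T T⁻¹ * max T (y / T) := by
  have hmax : 0 < max T (y / T) := lt_max_of_lt_left hT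
  refine max_le ?_ ?_
  · calc (1 : ℝ) = T⁻¹ * T := (inv_mul_cancel₀ hT.ne').symm
      _ ≤ max T T⁻¹ * max T (y / T) := by gcongr <;> simp
  · calc y = T * (y / T) := (mul_div_cancel₀ y hT.ne').symm
      _ ≤ T * max T (y / T) := by gcongr; exact le_max_right _ _
      _ ≤ max T T⁻¹ * max T (y / T) := by gcongr; exact le_max_left _ _

theorem max_div_rpow_neg_le {T : ℝ} (hT : 0 < T) (y : ℝ) {σ : ℝ} (hσ : 0 ≤ σ) :
    max T (y / T) ^ (-σ) ≤ max T T⁻¹ ^ ⌈σ⌉₊ * max 1 y ^ (-σ) := by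
  set A := max T T⁻¹
  have hA : 1 ≤ A := by
    rcases le_total 1 T with h | h
    · exact h.trans (le_max_left _ _)
    · exact (one_le_inv₀ hT |>.mpr h).trans (le_max_right _ _)
  have hM : 0 < max 1 y := lt_max_of_lt_left one_pos
  calc max T (y / T) ^ (-σ) ≤ (max 1 y / A) ^ (-σ) :=
        Real.rpow_le_rpow_of_nonpos (by positivity)
          (div_le_of_le_mul₀ (by positivity) (by positivity)
            (mul_comm A _ ▸ max_one_le_max_inv_mul_max hT y))
          (neg_nonpos.mpr hσ)
    _ = A ^ σ * max 1 y ^ (-σ) := by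
        rw [Real.div_rpow hM.le (by positivity), Real.rpow_neg (by positivity : 0 ≤ A) σ,
          div_inv_eq_mul, mul_comm]
    _ ≤ A ^ ⌈σ⌉₊ * max 1 y ^ (-σ) := by
        gcongr
        rw [← Real.rpow_natCast]
        exact Real.rpow_le_rpow_of_exponent_le hA (Nat.le_ceil σ)

theorem classOne_whittaker_moderate_growth_general
    (p : ℕ) [Fact p.Prime]
    [MeasurableSpace ℚ_[p]] [BorelSpace ℚ_[p]]
    (μ : Measure ℚ_[p]) [μ.IsAddHaarMeasure]
    (ψ : ℚ_[p] → ℂ)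
    (hψabs : ∀ x : ℚ_[p], ‖ψ x‖ = 1)
    (ν : ℂ) (hν : 0 < ν.re) :
    ∃ C : ℝ, 0 < C ∧ ∃ m : ℕ, ∀ t : ℚ_[p], t ≠ 0 →
      ‖∫ x, ψ (-x) * ((max ‖t‖ (‖x‖ / ‖t‖) : ℝ) : ℂ) ^ (-(ν + 1)) ∂μ‖ ≤
        C * (max ‖t‖ ‖t‖⁻¹) ^ m := by
  set σ := ν.re + 1
  have hσ : 1 < σ := by linarith
  have hint := Padic.integrable_max_one_norm_rpow_neg μ hσ
  have hint_nonneg : 0 ≤ ∫ x, max 1 ‖x‖ ^ (-σ) ∂μ :=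
    integral_nonneg fun x => by positivity
  refine ⟨∫ x, max 1 ‖x‖ ^ (-σ) ∂μ + 1, by linarith, ⌈σ⌉₊, fun t ht => ?_⟩
  set A := max ‖t‖ ‖t‖⁻¹
  have hbound (x : ℚ_[p]) :
      ‖ψ (-x) * ((max ‖t‖ (‖x‖ / ‖t‖) : ℝ) : ℂ) ^ (-(ν + 1))‖ ≤
        A ^ ⌈σ⌉₊ * max 1 ‖x‖ ^ (-σ) := by
    have hT := norm_pos_iff.mpr ht
    rw [norm_mul, hψabs, one_mul,
      Complex.norm_cpow_eq_rpow_re_of_pos (lt_max_of_lt_left hT)]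
    simpa [σ] using max_div_rpow_neg_le hT ‖x‖ (by linarith : 0 ≤ σ)
  calc _ ≤ ∫ x, A ^ ⌈σ⌉₊ * max 1 ‖x‖ ^ (-σ) ∂μ :=
        norm_integral_le_of_norm_le (hint.const_mul _) (.of_forall hbound)
    _ = A ^ ⌈σ⌉₊ * ∫ x, max 1 ‖x‖ ^ (-σ) ∂μ := integral_const_mul _ _
    _ ≤ (∫ x, max 1 ‖x‖ ^ (-σ) ∂μ + 1) * A ^ ⌈σ⌉₊ := by
        rw [mul_comm]
        gcongr
        linarith

/-- Moderate growth of the class-one `p`-adic Whittaker function: there are `C > 0` and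
`m ∈ ℕ` with `|W_ν(t)| ≤ C·max(|t|, |t|⁻¹)ᵐ` for all `t ∈ ℚ_p^×`; note
`max(|t|, |t|⁻¹) = ‖a(t)‖` is the matrix norm of `a(t) = diag(t, t⁻¹)`. -/
theorem classOne_whittaker_moderate_growth
    (p : ℕ) [Fact p.Prime]
    [MeasurableSpace ℚ_[p]] [BorelSpace ℚ_[p]]
    (μ : Measure ℚ_[p]) [μ.IsAddHaarMeasure]
    (hμ : μ {x : ℚ_[p] | ‖x‖ ≤ 1} = 1)
    (ψ : ℚ_[p] → ℂ) (hψc : Continuous ψ)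
    (hψadd : ∀ x y : ℚ_[p], ψ (x + y) = ψ x * ψ y)
    (hψabs : ∀ x : ℚ_[p], ‖ψ x‖ = 1)
    (hψtriv : ∀ x : ℚ_[p], ‖x‖ ≤ 1 → ψ x = 1)
    (hψnt : ∃ x : ℚ_[p], ‖x‖ ≤ (p : ℝ) ∧ ψ x ≠ 1)
    (ν : ℂ) (hν : 0 < ν.re) :
    ∃ C : ℝ, 0 < C ∧ ∃ m : ℕ, ∀ t : ℚ_[p], t ≠ 0 →
      ‖∫ x, ψ (-x) * ((max ‖t‖ (‖x‖ / ‖t‖) : ℝ) : ℂ) ^ (-(ν + 1)) ∂μ‖ ≤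
        C * (max ‖t‖ ‖t‖⁻¹) ^ m :=
  classOne_whittaker_moderate_growth_general p μ ψ hψabs ν hν
end
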